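/- arXiv:2101.00312 — 2 statements merged into one kernel-verified Lean document; each statement's English description precedes it below -/
import Mathlib

section
/- Let T be a bounded linear operator on H admitting a reduced A-adjoint T^♯. Then (1/4)·‖T^♯T + TT^♯‖_A ≤ (1/2)·∫₀¹ ‖λ·Re_A(T)² + (1−λ)·(Re_A(T)² + Im_A(T)²)/2‖_A dλ + (1/2)·∫₀¹ ‖λ·Im_A(T)² + (1−λ)·(Re_A(T)² + Im_A(T)²)/2‖_A dλ ≤ ω_A(T)². -/
open ContinuousLinearMap

variable {H : Type*} [NormedAddCommGroup H] [InnerProductSpace ℂ H] [CompleteSpace H]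

/-- The seminorm on `H` induced by a positive operator `A`: `‖x‖_A = √⟨Ax,x⟩`. -/
noncomputable def vnA (A : H →L[ℂ] H) (x : H) : ℝ :=
  Real.sqrt (RCLike.re (inner ℂ (A x) x : ℂ))

/-- The `A`-seminorm of an operator: `‖X‖_A = sup {‖Xx‖_A : ‖x‖_A = 1}`. -/
noncomputable def opnA (A : H →L[ℂ] H) (X : H →L[ℂ] H) : ℝ :=
  sSup ((fun x => vnA A (X x)) '' {x : H | vnA A x = 1})

/-- The `A`-numerical radius: `ω_A(X) = sup {|⟨Xx,x⟩_A| : ‖x‖_A = 1}`. -/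
noncomputable def wA (A : H →L[ℂ] H) (X : H →L[ℂ] H) : ℝ :=
  sSup ((fun x => ‖(inner ℂ (A (X x)) x : ℂ)‖) '' {x : H | vnA A x = 1})

/-- `S` is the reduced `A`-adjoint of `T`: `A ∘ S = T* ∘ A` and
`range S ⊆ closure (range A)`. -/
def IsReducedAdjA (A T S : H →L[ℂ] H) : Prop :=
  A ∘L S = (ContinuousLinearMap.adjoint T) ∘L A ∧
    Set.range S ⊆ closure (Set.range (A : H → H))

/-- `X` is `A`-selfadjoint: `A ∘ X = X* ∘ A`. -/
def IsSelfAdjA (A X : H →L[ℂ] H) : Prop :=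
  A ∘L X = (ContinuousLinearMap.adjoint X) ∘L A

/-- `Re_A(T) = (T + T♯)/2`. -/
noncomputable def ReA (T Ts : H →L[ℂ] H) : H →L[ℂ] H := (2 : ℂ)⁻¹ • (T + Ts)

/-- `Im_A(T) = (T - T♯)/(2i)`. -/
noncomputable def ImA (T Ts : H →L[ℂ] H) : H →L[ℂ] H := (2 * Complex.I)⁻¹ • (T - Ts)

/-!
Write `A = B * B` with `B = √A`, so that `‖x‖_A = ‖B x‖`. An operator `X` with an `A`-adjoint `S`
is `A`-bounded: for the `A`-selfadjoint `M = S X`, iterating Cauchy–Schwarz gives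
`⟨M x, x⟩_A ^ 2 ^ n ≤ ⟨M ^ 2 ^ n x, x⟩_A * ‖x‖_A ^ (2 * (2 ^ n - 1))`, and the `2 ^ n`-th root
of the right side tends to at most `‖M‖ * ‖x‖_A ^ 2`. For an `A`-selfadjoint `R`, polarization
and the parallelogram law give `‖R‖_A ≤ ω_A(R)`, hence
`‖Re_A(T) ^ 2‖_A ≤ ω_A(Re_A(T)) ^ 2 ≤ ω_A(T) ^ 2`, and likewise for `Im_A(T)`.
Since `Re_A(T) ^ 2 + Im_A(T) ^ 2 = (T♯ T + T T♯) / 2` is, for every `λ`, the sum of the two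
operators under the integrals, the first inequality is the triangle inequality; the second holds
pointwise in `λ` because both integrands are norms of convex combinations of operators of
`A`-seminorm at most `ω_A(T) ^ 2`.
-/

set_option linter.unusedSectionVars false

open scoped InnerProductSpace

theorem le_of_sq_le_succ_of_le_mul_pow {u : ℕ → ℝ} {c K : ℝ} (hc : 0 ≤ c)
    (hstep : ∀ n, u n ^ 2 ≤ u (n + 1)) (hbound : ∀ n, u n ≤ K * c ^ 2 ^ n) : u 0 ≤ c := by
  by_contra! hlt
  have hu0 : 0 < u 0 := hc.trans_lt hlt
  have hpow : ∀ n, u 0 ^ 2 ^ n ≤ u n := by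
    intro n
    induction n with
    | zero => simp
    | succ n ih =>
      calc u 0 ^ 2 ^ (n + 1) = (u 0 ^ 2 ^ n) ^ 2 := by rw [pow_succ, pow_mul]
        _ ≤ u n ^ 2 := pow_le_pow_left₀ (by positivity) ih 2
        _ ≤ u (n + 1) := hstep n
  have hc0 : 0 < c := by
    refine hc.lt_of_ne fun hc0 => ?_
    have := (hpow 0).trans (hbound 0)
    simp only [pow_zero, pow_one, ← hc0, mul_zero] at this
    linarith
  have hr : 1 < u 0 / c := (one_lt_div hc0).2 hlt
  obtain ⟨n, hn⟩ := pow_unbounded_of_one_lt K hr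
  have hK : (u 0 / c) ^ 2 ^ n ≤ K := by
    rw [div_pow, div_le_iff₀ (by positivity)]
    exact (hpow n).trans (hbound n)
  exact lt_irrefl _ (hn.trans_le ((pow_le_pow_right₀ hr.le Nat.lt_two_pow_self.le).trans hK))

theorem le_mul_of_sq_le_succ_mul_of_le_mul_pow {u : ℕ → ℝ} {c t K : ℝ} (hc : 0 ≤ c)
    (ht : 0 < t) (hstep : ∀ n, u n ^ 2 ≤ u (n + 1) * t) (hbound : ∀ n, u n ≤ K * c ^ 2 ^ n) :
    u 0 ≤ c * t := by
  have hstep' : ∀ n, (u n / t) ^ 2 ≤ u (n + 1) / t := fun n => by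
    rw [div_pow, div_le_div_iff₀ (by positivity) ht]
    nlinarith [hstep n]
  have hbound' : ∀ n, u n / t ≤ K / t * c ^ 2 ^ n := fun n => by
    rw [div_mul_eq_mul_div]
    exact div_le_div_of_nonneg_right (hbound n) ht.le
  have := le_of_sq_le_succ_of_le_mul_pow (u := fun n => u n / t) hc hstep' hbound'
  rwa [div_le_iff₀ ht] at this

theorem ContinuousLinearMap.IsPositive.exists_inner_apply_eq {A : H →L[ℂ] H} (hA : A.IsPositive) :
    ∃ B : H →L[ℂ] H, ∀ x y, ⟪A x, y⟫_ℂ = ⟪B x, B y⟫_ℂ := by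
  have hA' : 0 ≤ A := (nonneg_iff_isPositive A).2 hA
  have hB : adjoint (CFC.sqrt A) = CFC.sqrt A :=
    isSelfAdjoint_iff'.1 ((nonneg_iff_isPositive _).1 (CFC.sqrt_nonneg A)).isSelfAdjoint
  refine ⟨CFC.sqrt A, fun x y => ?_⟩
  calc ⟪A x, y⟫_ℂ = ⟪adjoint (CFC.sqrt A) (CFC.sqrt A x), y⟫_ℂ := by
        rw [hB, ← comp_apply, ← mul_def, CFC.sqrt_mul_sqrt_self A hA']
    _ = ⟪CFC.sqrt A x, CFC.sqrt A y⟫_ℂ := adjoint_inner_left _ _ _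

section SemiInner

variable {A B : H →L[ℂ] H}

theorem vnA_eq_norm (hB : ∀ x y, ⟪A x, y⟫_ℂ = ⟪B x, B y⟫_ℂ) (x : H) : vnA A x = ‖B x‖ := by
  rw [vnA, hB, inner_self_eq_norm_sq, Real.sqrt_sq (norm_nonneg _)]

theorem adjoint_eq_self_of_inner_eq (hB : ∀ x y, ⟪A x, y⟫_ℂ = ⟪B x, B y⟫_ℂ) : adjoint A = A :=
  ((eq_adjoint_iff A A).2 fun x y => by rw [hB, ← inner_conj_symm, ← hB, inner_conj_symm]).symm

theorem inner_apply_eq_of_adjA {X S : H →L[ℂ] H} (hS : A ∘L S = adjoint X ∘L A) (x y : H) :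
    ⟪A (S x), y⟫_ℂ = ⟪A x, X y⟫_ℂ := by
  rw [← comp_apply, hS, comp_apply, adjoint_inner_left]

theorem IsSelfAdjA.pow {M : H →L[ℂ] H} (hM : IsSelfAdjA A M) (n : ℕ) : IsSelfAdjA A (M ^ n) := by
  have hM' : A * M = adjoint M * A := hM
  show A * M ^ n = adjoint (M ^ n) * A
  rw [← star_eq_adjoint, star_pow, star_eq_adjoint]
  induction n with
  | zero => simp
  | succ n ih => rw [pow_succ, pow_succ, ← mul_assoc, ih, mul_assoc, hM', ← mul_assoc]

theorem re_inner_apply_le_of_isSelfAdjA (hB : ∀ x y, ⟪A x, y⟫_ℂ = ⟪B x, B y⟫_ℂ)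
    {M : H →L[ℂ] H} (hM : IsSelfAdjA A M) (x : H) :
    RCLike.re ⟪A (M x), x⟫_ℂ ≤ ‖M‖ * ‖B x‖ ^ 2 := by
  rcases (sq_nonneg ‖B x‖).eq_or_lt with hBx | hBx
  · rw [← hBx, mul_zero, hB, norm_eq_zero.1 (pow_eq_zero_iff two_ne_zero |>.1 hBx.symm),
      inner_zero_right, map_zero]
  set u : ℕ → ℝ := fun n => RCLike.re ⟪A ((M ^ 2 ^ n) x), x⟫_ℂ
  have hstep : ∀ n, u n ^ 2 ≤ u (n + 1) * ‖B x‖ ^ 2 := fun n => by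
    set P := M ^ 2 ^ n
    have hsq : u (n + 1) = ‖B (P x)‖ ^ 2 := by
      have hP : M ^ 2 ^ (n + 1) = P * P := by rw [pow_succ, pow_mul, sq]
      simp only [u, hP]
      rw [show (P * P) x = P (P x) from rfl, inner_apply_eq_of_adjA (hM.pow _), hB,
        inner_self_eq_norm_sq]
    have hcs : |u n| ≤ ‖B (P x)‖ * ‖B x‖ :=
      calc |u n| = |RCLike.re ⟪B (P x), B x⟫_ℂ| := by rw [← hB]
        _ ≤ ‖B (P x)‖ * ‖B x‖ := (RCLike.abs_re_le_norm _).trans (norm_inner_le_norm _ _)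
    rw [hsq, ← mul_pow, ← sq_abs]
    exact pow_le_pow_left₀ (abs_nonneg _) hcs 2
  have hbound : ∀ n, u n ≤ ‖A‖ * ‖x‖ ^ 2 * ‖M‖ ^ 2 ^ n := fun n =>
    calc u n ≤ ‖A ((M ^ 2 ^ n) x)‖ * ‖x‖ := (RCLike.re_le_norm _).trans (norm_inner_le_norm _ _)
      _ ≤ ‖A‖ * (‖M ^ 2 ^ n‖ * ‖x‖) * ‖x‖ := by
        gcongr
        exact A.le_opNorm_of_le ((M ^ 2 ^ n).le_opNorm x)
      _ ≤ ‖A‖ * (‖M‖ ^ 2 ^ n * ‖x‖) * ‖x‖ := by gcongr; exact norm_pow_le' M (by positivity)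
      _ = ‖A‖ * ‖x‖ ^ 2 * ‖M‖ ^ 2 ^ n := by ring
  simpa [u] using le_mul_of_sq_le_succ_mul_of_le_mul_pow (norm_nonneg M) hBx hstep hbound

theorem adjoint_comp_eq_comp_of_adjA (hA : adjoint A = A) {X S : H →L[ℂ] H}
    (hS : A ∘L S = adjoint X ∘L A) : adjoint S ∘L A = A ∘L X := by
  simpa only [adjoint_comp, hA, adjoint_adjoint] using congrArg adjoint hS

theorem isSelfAdjA_comp_of_adjA (hA : adjoint A = A) {X S : H →L[ℂ] H}
    (hS : A ∘L S = adjoint X ∘L A) : IsSelfAdjA A (S ∘L X) := by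
  have hS' := adjoint_comp_eq_comp_of_adjA hA hS
  rw [IsSelfAdjA, adjoint_comp, comp_assoc, hS', ← comp_assoc, hS, comp_assoc]

theorem norm_apply_sq_le_of_adjA (hB : ∀ x y, ⟪A x, y⟫_ℂ = ⟪B x, B y⟫_ℂ) {X S : H →L[ℂ] H}
    (hS : A ∘L S = adjoint X ∘L A) (x : H) : ‖B (X x)‖ ^ 2 ≤ ‖S ∘L X‖ * ‖B x‖ ^ 2 := by
  have h := re_inner_apply_le_of_isSelfAdjA hB
    (isSelfAdjA_comp_of_adjA (adjoint_eq_self_of_inner_eq hB) hS) x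
  rwa [comp_apply, inner_apply_eq_of_adjA hS, hB, inner_self_eq_norm_sq] at h

theorem exists_norm_apply_le_of_adjA (hB : ∀ x y, ⟪A x, y⟫_ℂ = ⟪B x, B y⟫_ℂ)
    {X S : H →L[ℂ] H} (hS : A ∘L S = adjoint X ∘L A) :
    ∃ C, ∀ x, ‖B (X x)‖ ≤ C * ‖B x‖ := by
  refine ⟨√‖S ∘L X‖, fun x => ?_⟩
  rw [← Real.sqrt_sq (norm_nonneg (B x)), ← Real.sqrt_mul (norm_nonneg _)]
  exact Real.le_sqrt_of_sq_le (norm_apply_sq_le_of_adjA hB hS x)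

theorem norm_map_ofReal_inv_norm_smul {x : H} (hx : B x ≠ 0) :
    ‖B (((‖B x‖⁻¹ : ℝ) : ℂ) • x)‖ = 1 := by
  rw [map_smul, norm_smul, Complex.norm_real, norm_inv, norm_norm,
    inv_mul_cancel₀ (norm_ne_zero_iff.2 hx)]

end SemiInner

section SeminormA

variable {A B : H →L[ℂ] H}

theorem opnA_nonneg (X : H →L[ℂ] H) : 0 ≤ opnA A X :=
  Real.sSup_nonneg (by rintro _ ⟨x, -, rfl⟩; exact Real.sqrt_nonneg _)

theorem opnA_le_of_forall (hB : ∀ x y, ⟪A x, y⟫_ℂ = ⟪B x, B y⟫_ℂ) {X : H →L[ℂ] H} {C : ℝ}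
    (hC : 0 ≤ C) (h : ∀ x, ‖B x‖ = 1 → ‖B (X x)‖ ≤ C) : opnA A X ≤ C := by
  refine Real.sSup_le ?_ hC
  rintro _ ⟨x, hx : vnA A x = 1, rfl⟩
  rw [vnA_eq_norm hB] at hx
  simpa only [vnA_eq_norm hB] using h x hx

theorem norm_apply_le_opnA_mul (hB : ∀ x y, ⟪A x, y⟫_ℂ = ⟪B x, B y⟫_ℂ) {X S : H →L[ℂ] H}
    (hS : A ∘L S = adjoint X ∘L A) (x : H) : ‖B (X x)‖ ≤ opnA A X * ‖B x‖ := by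
  by_cases hx : B x = 0
  · have h := norm_apply_sq_le_of_adjA hB hS x
    rw [hx, norm_zero, zero_pow two_ne_zero, mul_zero] at h
    rw [hx, norm_zero, mul_zero]
    nlinarith [norm_nonneg (B (X x))]
  obtain ⟨C, hC⟩ := exists_norm_apply_le_of_adjA hB hS
  have hbdd : BddAbove ((fun x => vnA A (X x)) '' {x : H | vnA A x = 1}) := by
    refine ⟨C, ?_⟩
    rintro _ ⟨y, hy : vnA A y = 1, rfl⟩
    rw [vnA_eq_norm hB] at hy
    simpa only [vnA_eq_norm hB, hy, mul_one] using hC y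
  have hunit := norm_map_ofReal_inv_norm_smul hx
  have h : vnA A (X _) ≤ opnA A X := le_csSup hbdd ⟨_, (vnA_eq_norm hB _).trans hunit, rfl⟩
  rw [vnA_eq_norm hB, map_smul, map_smul, norm_smul, Complex.norm_real, norm_inv, norm_norm,
    inv_mul_le_iff₀ (norm_pos_iff.2 hx)] at h
  linarith

theorem opnA_add_le (hB : ∀ x y, ⟪A x, y⟫_ℂ = ⟪B x, B y⟫_ℂ) {X Y S T : H →L[ℂ] H}
    (hS : A ∘L S = adjoint X ∘L A) (hT : A ∘L T = adjoint Y ∘L A) :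
    opnA A (X + Y) ≤ opnA A X + opnA A Y := by
  refine opnA_le_of_forall hB (add_nonneg (opnA_nonneg X) (opnA_nonneg Y)) fun x hx => ?_
  calc ‖B ((X + Y) x)‖ ≤ ‖B (X x)‖ + ‖B (Y x)‖ := by
        rw [add_apply, map_add]; exact norm_add_le _ _
    _ ≤ opnA A X + opnA A Y := by
        have := norm_apply_le_opnA_mul hB hS x
        have := norm_apply_le_opnA_mul hB hT x
        rw [hx, mul_one] at *
        linarith

theorem opnA_smul_le (hB : ∀ x y, ⟪A x, y⟫_ℂ = ⟪B x, B y⟫_ℂ) {X S : H →L[ℂ] H}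
    (hS : A ∘L S = adjoint X ∘L A) (c : ℂ) : opnA A (c • X) ≤ ‖c‖ * opnA A X := by
  refine opnA_le_of_forall hB (mul_nonneg (norm_nonneg c) (opnA_nonneg X)) fun x hx => ?_
  rw [smul_apply, map_smul, norm_smul]
  gcongr
  simpa only [hx, mul_one] using norm_apply_le_opnA_mul hB hS x

theorem opnA_mul_le (hB : ∀ x y, ⟪A x, y⟫_ℂ = ⟪B x, B y⟫_ℂ) {X Y S T : H →L[ℂ] H}
    (hS : A ∘L S = adjoint X ∘L A) (hT : A ∘L T = adjoint Y ∘L A) :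
    opnA A (X * Y) ≤ opnA A X * opnA A Y := by
  refine opnA_le_of_forall hB (mul_nonneg (opnA_nonneg X) (opnA_nonneg Y)) fun x hx => ?_
  calc ‖B (X (Y x))‖ ≤ opnA A X * ‖B (Y x)‖ := norm_apply_le_opnA_mul hB hS _
    _ ≤ opnA A X * opnA A Y := by
        gcongr
        · exact opnA_nonneg X
        · simpa only [hx, mul_one] using norm_apply_le_opnA_mul hB hT x

end SeminormA

section NumericalRadiusA

variable {A B : H →L[ℂ] H}

theorem wA_nonneg (X : H →L[ℂ] H) : 0 ≤ wA A X :=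
  Real.sSup_nonneg (by rintro _ ⟨x, -, rfl⟩; exact norm_nonneg _)

theorem norm_inner_apply_le_wA_mul (hB : ∀ x y, ⟪A x, y⟫_ℂ = ⟪B x, B y⟫_ℂ) {X S : H →L[ℂ] H}
    (hS : A ∘L S = adjoint X ∘L A) (x : H) : ‖⟪A (X x), x⟫_ℂ‖ ≤ wA A X * ‖B x‖ ^ 2 := by
  by_cases hx : B x = 0
  · rw [hB, hx, inner_zero_right, norm_zero, norm_zero, zero_pow two_ne_zero, mul_zero]
  obtain ⟨C, hC⟩ := exists_norm_apply_le_of_adjA hB hS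
  have hbdd : BddAbove ((fun x => ‖⟪A (X x), x⟫_ℂ‖) '' {x : H | vnA A x = 1}) := by
    refine ⟨C, ?_⟩
    rintro _ ⟨y, hy : vnA A y = 1, rfl⟩
    rw [vnA_eq_norm hB] at hy
    calc ‖⟪A (X y), y⟫_ℂ‖ = ‖⟪B (X y), B y⟫_ℂ‖ := by rw [hB]
      _ ≤ ‖B (X y)‖ * ‖B y‖ := norm_inner_le_norm _ _
      _ ≤ C := by simpa only [hy, mul_one] using hC y
  set c : ℂ := ((‖B x‖⁻¹ : ℝ) : ℂ)
  have h : ‖⟪A (X (c • x)), c • x⟫_ℂ‖ ≤ wA A X :=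
    le_csSup hbdd ⟨_, (vnA_eq_norm hB _).trans (norm_map_ofReal_inv_norm_smul hx), rfl⟩
  rw [map_smul, map_smul, inner_smul_left, inner_smul_right, norm_mul, norm_mul,
    RCLike.norm_conj, Complex.norm_real, norm_inv, norm_norm, ← mul_assoc, ← sq, inv_pow,
    inv_mul_le_iff₀ (by positivity)] at h
  linarith

theorem four_mul_re_inner_apply_le_wA (hB : ∀ x y, ⟪A x, y⟫_ℂ = ⟪B x, B y⟫_ℂ)
    {R : H →L[ℂ] H} (hR : IsSelfAdjA A R) (x y : H) :
    4 * RCLike.re ⟪A (R x), y⟫_ℂ ≤ 2 * wA A R * (‖B x‖ ^ 2 + ‖B y‖ ^ 2) := by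
  have hpolar : 4 * RCLike.re ⟪A (R x), y⟫_ℂ =
      RCLike.re ⟪A (R (x + y)), x + y⟫_ℂ - RCLike.re ⟪A (R (x - y)), x - y⟫_ℂ := by
    have hsymm : ⟪A (R y), x⟫_ℂ = (starRingEnd ℂ) ⟪A (R x), y⟫_ℂ := by
      rw [inner_apply_eq_of_adjA hR, hB, hB, inner_conj_symm]
    simp only [map_add, map_sub, inner_add_left, inner_add_right, inner_sub_left,
      inner_sub_right, hsymm, RCLike.conj_re]
    ring
  have hle : ∀ z, |RCLike.re ⟪A (R z), z⟫_ℂ| ≤ wA A R * ‖B z‖ ^ 2 := fun z =>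
    (RCLike.abs_re_le_norm _).trans (norm_inner_apply_le_wA_mul hB hR z)
  have hsum := (abs_le.1 (hle (x + y))).2
  have hdiff := (abs_le.1 (hle (x - y))).1
  have hpar := parallelogram_law_with_norm ℂ (B x) (B y)
  have hw : wA A R * ‖B (x + y)‖ ^ 2 + wA A R * ‖B (x - y)‖ ^ 2 =
      2 * wA A R * (‖B x‖ ^ 2 + ‖B y‖ ^ 2) := by
    rw [← mul_add, map_add, map_sub, hpar]; ring
  linarith

theorem opnA_le_wA_of_isSelfAdjA (hB : ∀ x y, ⟪A x, y⟫_ℂ = ⟪B x, B y⟫_ℂ) {R : H →L[ℂ] H}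
    (hR : IsSelfAdjA A R) : opnA A R ≤ wA A R := by
  refine opnA_le_of_forall hB (wA_nonneg R) fun x hx => ?_
  by_cases hRx : B (R x) = 0
  · rw [hRx, norm_zero]; exact wA_nonneg R
  set y := ((‖B (R x)‖⁻¹ : ℝ) : ℂ) • R x
  have hy : ‖B y‖ = 1 := norm_map_ofReal_inv_norm_smul hRx
  have hre : RCLike.re ⟪A (R x), y⟫_ℂ = ‖B (R x)‖ := by
    rw [inner_smul_right, hB, inner_self_eq_norm_sq_to_K]
    simp only [Complex.ofReal_inv, Complex.coe_algebraMap, sq, ne_eq, Complex.ofReal_eq_zero,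
      norm_eq_zero, hRx, not_false_eq_true, inv_mul_cancel_left₀, RCLike.re_to_complex,
      Complex.ofReal_re]
  have h := four_mul_re_inner_apply_le_wA hB hR x y
  rw [hre, hx, hy] at h
  linarith

end NumericalRadiusA

section CartesianDecompositionA

variable {A B T Ts : H →L[ℂ] H}

theorem IsSelfAdjA.add {X Y : H →L[ℂ] H} (hX : IsSelfAdjA A X) (hY : IsSelfAdjA A Y) :
    IsSelfAdjA A (X + Y) := by
  rw [IsSelfAdjA, map_add, comp_add, add_comp, hX, hY]

theorem IsSelfAdjA.sub {X Y : H →L[ℂ] H} (hX : IsSelfAdjA A X) (hY : IsSelfAdjA A Y) :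
    IsSelfAdjA A (X - Y) := by
  rw [IsSelfAdjA, map_sub, comp_sub, sub_comp, hX, hY]

theorem IsSelfAdjA.ofReal_smul {X : H →L[ℂ] H} (hX : IsSelfAdjA A X) (r : ℝ) :
    IsSelfAdjA A ((r : ℂ) • X) := by
  rw [IsSelfAdjA, comp_smul, hX, map_smulₛₗ, Complex.conj_ofReal, smul_comp]

theorem IsSelfAdjA.inv_two_smul_add {X Y : H →L[ℂ] H} (hX : IsSelfAdjA A X)
    (hY : IsSelfAdjA A Y) : IsSelfAdjA A ((2 : ℂ)⁻¹ • (X + Y)) := by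
  simpa using (hX.add hY).ofReal_smul 2⁻¹

theorem isSelfAdjA_reA (hA : adjoint A = A) (hTs : A ∘L Ts = adjoint T ∘L A) :
    IsSelfAdjA A (ReA T Ts) := by
  have hadd : IsSelfAdjA A (T + Ts) := by
    rw [IsSelfAdjA, map_add, comp_add, add_comp, hTs, ← adjoint_comp_eq_comp_of_adjA hA hTs,
      add_comm]
  have hReA : ReA T Ts = ((2⁻¹ : ℝ) : ℂ) • (T + Ts) := by rw [ReA]; push_cast; rfl
  exact hReA ▸ hadd.ofReal_smul _

theorem isSelfAdjA_imA (hA : adjoint A = A) (hTs : A ∘L Ts = adjoint T ∘L A) :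
    IsSelfAdjA A (ImA T Ts) := by
  rw [IsSelfAdjA, ImA, comp_smul, map_smulₛₗ, smul_comp, map_sub, comp_sub, sub_comp, hTs,
    ← adjoint_comp_eq_comp_of_adjA hA hTs, ← neg_sub, smul_neg, ← neg_smul]
  congr 1
  simp only [map_inv₀, map_mul, map_ofNat, Complex.conj_I]
  field_simp

theorem inner_apply_reA (hB : ∀ x y, ⟪A x, y⟫_ℂ = ⟪B x, B y⟫_ℂ)
    (hTs : A ∘L Ts = adjoint T ∘L A) (x : H) :
    ⟪A (ReA T Ts x), x⟫_ℂ = ((⟪A (T x), x⟫_ℂ).re : ℂ) := by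
  have hconj : ⟪A (Ts x), x⟫_ℂ = (starRingEnd ℂ) ⟪A (T x), x⟫_ℂ := by
    rw [inner_apply_eq_of_adjA hTs, hB, hB, inner_conj_symm]
  simp only [ReA, smul_apply, add_apply, map_smul, map_add, inner_smul_left, inner_add_left,
    hconj, Complex.add_conj, map_inv₀, map_ofNat]
  push_cast
  field_simp

-- Mathlib's inner product is conjugate-linear in its first argument, so `⟪A x, y⟫_ℂ` is the
-- conjugate of `⟨x, y⟩_A`; hence the sign.
theorem inner_apply_imA (hB : ∀ x y, ⟪A x, y⟫_ℂ = ⟪B x, B y⟫_ℂ)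
    (hTs : A ∘L Ts = adjoint T ∘L A) (x : H) :
    ⟪A (ImA T Ts x), x⟫_ℂ = -((⟪A (T x), x⟫_ℂ).im : ℂ) := by
  have hconj : ⟪A (Ts x), x⟫_ℂ = (starRingEnd ℂ) ⟪A (T x), x⟫_ℂ := by
    rw [inner_apply_eq_of_adjA hTs, hB, hB, inner_conj_symm]
  simp only [ImA, smul_apply, sub_apply, map_smul, map_sub, inner_smul_left, inner_sub_left,
    hconj, Complex.sub_conj, map_inv₀, map_mul, map_ofNat, Complex.conj_I]
  push_cast
  field_simp

theorem reA_sq_add_imA_sq (T Ts : H →L[ℂ] H) :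
    ReA T Ts ^ 2 + ImA T Ts ^ 2 = (2 : ℂ)⁻¹ • (Ts ∘L T + T ∘L Ts) := by
  have hI : (2 * Complex.I)⁻¹ * (2 * Complex.I)⁻¹ = -(4 : ℂ)⁻¹ := by
    rw [← mul_inv, mul_mul_mul_comm, Complex.I_mul_I]; norm_num
  simp only [ReA, ImA, sq, smul_mul_smul_comm, hI, mul_add, add_mul, mul_sub, sub_mul, ← mul_def]
  module

end CartesianDecompositionA

section Bounds

variable {A B T Ts : H →L[ℂ] H}

theorem wA_le_of_forall (hB : ∀ x y, ⟪A x, y⟫_ℂ = ⟪B x, B y⟫_ℂ) {X Y S : H →L[ℂ] H}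
    (hS : A ∘L S = adjoint Y ∘L A) (h : ∀ x, ‖⟪A (X x), x⟫_ℂ‖ ≤ ‖⟪A (Y x), x⟫_ℂ‖) :
    wA A X ≤ wA A Y := by
  refine Real.sSup_le ?_ (wA_nonneg Y)
  rintro _ ⟨x, hx : vnA A x = 1, rfl⟩
  rw [vnA_eq_norm hB] at hx
  simpa only [hx, one_pow, mul_one] using (h x).trans (norm_inner_apply_le_wA_mul hB hS x)

theorem opnA_pow_two_le_wA_sq (hB : ∀ x y, ⟪A x, y⟫_ℂ = ⟪B x, B y⟫_ℂ) {R : H →L[ℂ] H}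
    (hR : IsSelfAdjA A R) : opnA A (R ^ 2) ≤ wA A R ^ 2 := by
  rw [sq, sq]
  exact (opnA_mul_le hB hR hR).trans (mul_self_le_mul_self (opnA_nonneg R)
    (opnA_le_wA_of_isSelfAdjA hB hR))

theorem opnA_reA_sq_le (hB : ∀ x y, ⟪A x, y⟫_ℂ = ⟪B x, B y⟫_ℂ)
    (hTs : A ∘L Ts = adjoint T ∘L A) : opnA A (ReA T Ts ^ 2) ≤ wA A T ^ 2 := by
  have hw : wA A (ReA T Ts) ≤ wA A T := wA_le_of_forall hB hTs fun x => by
    rw [inner_apply_reA hB hTs, Complex.norm_real, Real.norm_eq_abs]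
    exact Complex.abs_re_le_norm _
  exact (opnA_pow_two_le_wA_sq hB (isSelfAdjA_reA (adjoint_eq_self_of_inner_eq hB) hTs)).trans
    (pow_le_pow_left₀ (wA_nonneg _) hw 2)

theorem opnA_imA_sq_le (hB : ∀ x y, ⟪A x, y⟫_ℂ = ⟪B x, B y⟫_ℂ)
    (hTs : A ∘L Ts = adjoint T ∘L A) : opnA A (ImA T Ts ^ 2) ≤ wA A T ^ 2 := by
  have hw : wA A (ImA T Ts) ≤ wA A T := wA_le_of_forall hB hTs fun x => by
    rw [inner_apply_imA hB hTs, norm_neg, Complex.norm_real, Real.norm_eq_abs]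
    exact Complex.abs_im_le_norm _
  exact (opnA_pow_two_le_wA_sq hB (isSelfAdjA_imA (adjoint_eq_self_of_inner_eq hB) hTs)).trans
    (pow_le_pow_left₀ (wA_nonneg _) hw 2)

end Bounds

section Segment

variable {A B P Q G : H →L[ℂ] H}

theorem IsSelfAdjA.segment (hP : IsSelfAdjA A P) (hG : IsSelfAdjA A G) (l : ℝ) :
    IsSelfAdjA A ((l : ℂ) • P + ((1 : ℂ) - l) • G) := by
  have h := (hP.ofReal_smul l).add (hG.ofReal_smul (1 - l))
  push_cast at h
  exact h

theorem opnA_segment_le (hB : ∀ x y, ⟪A x, y⟫_ℂ = ⟪B x, B y⟫_ℂ) (hP : IsSelfAdjA A P)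
    (hG : IsSelfAdjA A G) {c : ℝ} (hPc : opnA A P ≤ c) (hGc : opnA A G ≤ c) {l : ℝ}
    (hl : l ∈ Set.Icc (0 : ℝ) 1) : opnA A ((l : ℂ) • P + ((1 : ℂ) - l) • G) ≤ c := by
  obtain ⟨hl0, hl1⟩ := hl
  have h1l : (1 : ℂ) - l = ((1 - l : ℝ) : ℂ) := by push_cast; ring
  calc opnA A ((l : ℂ) • P + ((1 : ℂ) - l) • G)
      ≤ ‖(l : ℂ)‖ * opnA A P + ‖((1 - l : ℝ) : ℂ)‖ * opnA A G := by
        rw [h1l]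
        exact (opnA_add_le hB (hP.ofReal_smul l) (hG.ofReal_smul _)).trans
          (add_le_add (opnA_smul_le hB hP _) (opnA_smul_le hB hG _))
    _ = l * opnA A P + (1 - l) * opnA A G := by
        rw [Complex.norm_real, Complex.norm_real, Real.norm_of_nonneg hl0,
          Real.norm_of_nonneg (sub_nonneg.2 hl1)]
    _ ≤ l * c + (1 - l) * c := by gcongr
    _ = c := by ring

theorem continuous_opnA_segment (hB : ∀ x y, ⟪A x, y⟫_ℂ = ⟪B x, B y⟫_ℂ) (hP : IsSelfAdjA A P)
    (hG : IsSelfAdjA A G) : Continuous fun l : ℝ => opnA A ((l : ℂ) • P + ((1 : ℂ) - l) • G) := by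
  refine (LipschitzWith.of_le_add_mul' (opnA A (P - G)) fun l l' => ?_).continuous
  have hsplit : (l : ℂ) • P + ((1 : ℂ) - l) • G =
      ((l' : ℂ) • P + ((1 : ℂ) - l') • G) + ((l - l' : ℝ) : ℂ) • (P - G) := by
    push_cast; module
  rw [hsplit, Real.dist_eq, mul_comm, ← Real.norm_eq_abs, ← Complex.norm_real]
  exact (opnA_add_le hB (hP.segment hG l') ((hP.sub hG).ofReal_smul _)).trans
    (add_le_add_right (opnA_smul_le hB (hP.sub hG) _) _)

theorem intervalIntegrable_opnA_segment (hB : ∀ x y, ⟪A x, y⟫_ℂ = ⟪B x, B y⟫_ℂ)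
    (hP : IsSelfAdjA A P) (hG : IsSelfAdjA A G) (a b : ℝ) :
    IntervalIntegrable (fun l : ℝ => opnA A ((l : ℂ) • P + ((1 : ℂ) - l) • G))
      MeasureTheory.volume a b :=
  (continuous_opnA_segment hB hP hG).intervalIntegrable a b

theorem integral_opnA_segment_le (hB : ∀ x y, ⟪A x, y⟫_ℂ = ⟪B x, B y⟫_ℂ) (hP : IsSelfAdjA A P)
    (hG : IsSelfAdjA A G) {c : ℝ} (hPc : opnA A P ≤ c) (hGc : opnA A G ≤ c) :
    ∫ l in (0 : ℝ)..1, opnA A ((l : ℂ) • P + ((1 : ℂ) - l) • G) ≤ c := by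
  calc ∫ l in (0 : ℝ)..1, opnA A ((l : ℂ) • P + ((1 : ℂ) - l) • G)
      ≤ ∫ _ in (0 : ℝ)..1, c :=
        intervalIntegral.integral_mono_on zero_le_one
          (intervalIntegrable_opnA_segment hB hP hG 0 1) intervalIntegrable_const
          fun l hl => opnA_segment_le hB hP hG hPc hGc hl
    _ = c := by simp

end Segment

section Integrals

variable {A B P Q : H →L[ℂ] H}

theorem half_opnA_add_le_integral (hB : ∀ x y, ⟪A x, y⟫_ℂ = ⟪B x, B y⟫_ℂ) (hP : IsSelfAdjA A P)
    (hQ : IsSelfAdjA A Q) :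
    (1 / 2) * opnA A (P + Q) ≤
      (1 / 2) * (∫ l in (0 : ℝ)..1, opnA A ((l : ℂ) • P + ((1 : ℂ) - l) • ((2 : ℂ)⁻¹ • (P + Q))))
      + (1 / 2) * (∫ l in (0 : ℝ)..1,
          opnA A ((l : ℂ) • Q + ((1 : ℂ) - l) • ((2 : ℂ)⁻¹ • (P + Q)))) := by
  have hG := hP.inv_two_smul_add hQ
  have hintP := intervalIntegrable_opnA_segment hB hP hG 0 1
  have hintQ := intervalIntegrable_opnA_segment hB hQ hG 0 1
  rw [← mul_add, ← intervalIntegral.integral_add hintP hintQ]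
  gcongr
  calc opnA A (P + Q) = ∫ _ in (0 : ℝ)..1, opnA A (P + Q) := by simp
    _ ≤ _ := intervalIntegral.integral_mono_on zero_le_one intervalIntegrable_const
          (hintP.add hintQ) fun l _ => by
            have hsum : P + Q = ((l : ℂ) • P + ((1 : ℂ) - l) • ((2 : ℂ)⁻¹ • (P + Q))) +
                ((l : ℂ) • Q + ((1 : ℂ) - l) • ((2 : ℂ)⁻¹ • (P + Q))) := by module
            conv_lhs => rw [hsum]
            exact opnA_add_le hB (hP.segment hG l) (hQ.segment hG l)

theorem half_integral_add_half_integral_le (hB : ∀ x y, ⟪A x, y⟫_ℂ = ⟪B x, B y⟫_ℂ)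
    (hP : IsSelfAdjA A P) (hQ : IsSelfAdjA A Q) {c : ℝ} (hPc : opnA A P ≤ c)
    (hQc : opnA A Q ≤ c) :
    (1 / 2) * (∫ l in (0 : ℝ)..1, opnA A ((l : ℂ) • P + ((1 : ℂ) - l) • ((2 : ℂ)⁻¹ • (P + Q))))
      + (1 / 2) * (∫ l in (0 : ℝ)..1,
          opnA A ((l : ℂ) • Q + ((1 : ℂ) - l) • ((2 : ℂ)⁻¹ • (P + Q)))) ≤ c := by
  have hG := hP.inv_two_smul_add hQ
  have hGc : opnA A ((2 : ℂ)⁻¹ • (P + Q)) ≤ c :=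
    calc opnA A ((2 : ℂ)⁻¹ • (P + Q)) ≤ ‖(2 : ℂ)⁻¹‖ * (opnA A P + opnA A Q) :=
          (opnA_smul_le hB (hP.add hQ) _).trans (by gcongr; exact opnA_add_le hB hP hQ)
      _ ≤ 2⁻¹ * (c + c) := by norm_num; linarith
      _ = c := by ring
  have := integral_opnA_segment_le hB hP hG hPc hGc
  have := integral_opnA_segment_le hB hQ hG hQc hGc
  linarith

end Integrals

theorem stmt4_general (A T Ts : H →L[ℂ] H) (hA : A.IsPositive)
    (hTs : IsReducedAdjA A T Ts) :
    (1/4) * opnA A (Ts ∘L T + T ∘L Ts) ≤ (1/2) * (∫ l in (0:ℝ)..1, opnA A ((l:ℂ) • (ReA T Ts) ^ (2:ℕ) + ((1:ℂ) - (l:ℂ)) • ((2:ℂ)⁻¹ • ((ReA T Ts) ^ (2:ℕ) + (ImA T Ts) ^ (2:ℕ))))) + (1/2) * (∫ l in (0:ℝ)..1, opnA A ((l:ℂ) • (ImA T Ts) ^ (2:ℕ) + ((1:ℂ) - (l:ℂ)) • ((2:ℂ)⁻¹ • ((ReA T Ts) ^ (2:ℕ) + (ImA T Ts) ^ (2:ℕ)))))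 ∧
    (1/2) * (∫ l in (0:ℝ)..1, opnA A ((l:ℂ) • (ReA T Ts) ^ (2:ℕ) + ((1:ℂ) - (l:ℂ)) • ((2:ℂ)⁻¹ • ((ReA T Ts) ^ (2:ℕ) + (ImA T Ts) ^ (2:ℕ))))) + (1/2) * (∫ l in (0:ℝ)..1, opnA A ((l:ℂ) • (ImA T Ts) ^ (2:ℕ) + ((1:ℂ) - (l:ℂ)) • ((2:ℂ)⁻¹ • ((ReA T Ts) ^ (2:ℕ) + (ImA T Ts) ^ (2:ℕ))))) ≤ (wA A T)^2 := by
  obtain ⟨B, hB⟩ := hA.exists_inner_apply_eq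
  have hAsa := adjoint_eq_self_of_inner_eq hB
  have hR2 := (isSelfAdjA_reA hAsa hTs.1).pow 2
  have hI2 := (isSelfAdjA_imA hAsa hTs.1).pow 2
  refine ⟨?_, half_integral_add_half_integral_le hB hR2 hI2 (opnA_reA_sq_le hB hTs.1)
    (opnA_imA_sq_le hB hTs.1)⟩
  have hsum : Ts ∘L T + T ∘L Ts = (2 : ℂ) • (ReA T Ts ^ 2 + ImA T Ts ^ 2) := by
    rw [reA_sq_add_imA_sq, smul_inv_smul₀ two_ne_zero]
  calc (1 / 4) * opnA A (Ts ∘L T + T ∘L Ts)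
      ≤ (1 / 4) * (‖(2 : ℂ)‖ * opnA A (ReA T Ts ^ 2 + ImA T Ts ^ 2)) := by
        rw [hsum]; gcongr; exact opnA_smul_le hB (hR2.add hI2) 2
    _ = (1 / 2) * opnA A (ReA T Ts ^ 2 + ImA T Ts ^ 2) := by norm_num; ring
    _ ≤ _ := half_opnA_add_le_integral hB hR2 hI2

theorem stmt4 (A T Ts : H →L[ℂ] H) (hA : A.IsPositive) (hA0 : A ≠ 0)
    (hTs : IsReducedAdjA A T Ts) :
    (1/4) * opnA A (Ts ∘L T + T ∘L Ts) ≤ (1/2) * (∫ l in (0:ℝ)..1, opnA A ((l:ℂ) • (ReA T Ts) ^ (2:ℕ) + ((1:ℂ) - (l:ℂ)) • ((2:ℂ)⁻¹ • ((ReA T Ts) ^ (2:ℕ) + (ImA T Ts) ^ (2:ℕ))))) + (1/2) * (∫ l in (0:ℝ)..1, opnA A ((l:ℂ) • (ImA T Ts) ^ (2:ℕ) + ((1:ℂ) - (l:ℂ)) • ((2:ℂ)⁻¹ • ((ReA T Ts) ^ (2:ℕ) + (ImA T Ts) ^ (2:ℕ))))) ∧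
    (1/2) * (∫ l in (0:ℝ)..1, opnA A ((l:ℂ) • (ReA T Ts) ^ (2:ℕ) + ((1:ℂ) - (l:ℂ)) • ((2:ℂ)⁻¹ • ((ReA T Ts) ^ (2:ℕ) + (ImA T Ts) ^ (2:ℕ))))) + (1/2) * (∫ l in (0:ℝ)..1, opnA A ((l:ℂ) • (ImA T Ts) ^ (2:ℕ) + ((1:ℂ) - (l:ℂ)) • ((2:ℂ)⁻¹ • ((ReA T Ts) ^ (2:ℕ) + (ImA T Ts) ^ (2:ℕ))))) ≤ (wA A T)^2 :=
  stmt4_general A T Ts hA hTs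
end

section
/- Let T be a bounded linear operator on H admitting a reduced A-adjoint T^♯. Then (1/4)·‖T^♯T + TT^♯‖_A ≤ (√2/2)·√(ω_A(T)⁴ + ‖Im_A(T)²·Re_A(T)²‖_A) ≤ ω_A(T)². -/
open ContinuousLinearMap

variable {H : Type*} [NormedAddCommGroup H] [InnerProductSpace ℂ H] [CompleteSpace H]

/-!
Write `B = √A`, so that `⟪A x, y⟫ = ⟪B x, B y⟫` and `‖x‖_A = ‖B x‖`: the `A`-seminorm inherits
Cauchy–Schwarz and the parallelogram law. For an `A`-selfadjoint `S`, polarization gives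
`‖S x‖_A ≤ c ‖x‖_A` as soon as `|⟨S u, u⟩_A| ≤ c` on the `A`-unit sphere. The quadratic forms of
`Re_A(T)` and `Im_A(T)` are the real and imaginary parts of that of `T`, so both are bounded by
`ω_A(T)` in this sense. As `T♯T + TT♯ = 2 (Re_A(T)² + Im_A(T)²)`, expanding
`‖Re_A(T)² x + Im_A(T)² x‖_A²` and moving `Im_A(T)²` across the cross term bounds it by
`2 ω_A(T)⁴ + 2 ‖Im_A(T)² Re_A(T)²‖_A`; the second inequality is `‖Im_A(T)² Re_A(T)²‖_A ≤ ω_A(T)⁴`.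

That `ω_A(T)` is finite (so that the supremum defining it is not a junk value) follows from
`‖S x‖_A ≤ ‖S‖ ‖x‖_A` for `A`-selfadjoint `S`, obtained by iterating `‖S x‖_A² ≤ ‖x‖_A ‖S² x‖_A`.
-/

open scoped InnerProductSpace

set_option linter.unusedSectionVars false

section Seminorm

variable {A : H →L[ℂ] H}

lemma inner_apply_eq_inner_sqrt (hA : A.IsPositive) (x y : H) :
    ⟪A x, y⟫_ℂ = ⟪CFC.sqrt A x, CFC.sqrt A y⟫_ℂ := by
  conv_lhs => rw [← CFC.sqrt_mul_sqrt_self A ((nonneg_iff_isPositive A).mpr hA)]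
  exact (CFC.sqrt_nonneg A).isSelfAdjoint.isSymmetric _ _

lemma vnA_eq_norm_sqrt (hA : A.IsPositive) (x : H) : vnA A x = ‖CFC.sqrt A x‖ := by
  rw [vnA, inner_apply_eq_inner_sqrt hA, inner_self_eq_norm_sq, Real.sqrt_sq (norm_nonneg _)]

lemma vnA_nonneg (A : H →L[ℂ] H) (x : H) : 0 ≤ vnA A x := Real.sqrt_nonneg _

lemma vnA_sq (hA : A.IsPositive) (x : H) : vnA A x ^ 2 = RCLike.re ⟪A x, x⟫_ℂ :=
  Real.sq_sqrt (hA.re_inner_nonneg_left x)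

lemma vnA_smul (hA : A.IsPositive) (c : ℂ) (x : H) : vnA A (c • x) = ‖c‖ * vnA A x := by
  simp only [vnA_eq_norm_sqrt hA, map_smul, norm_smul]

lemma vnA_le_norm_sqrt_mul (hA : A.IsPositive) (x : H) : vnA A x ≤ ‖CFC.sqrt A‖ * ‖x‖ :=
  (vnA_eq_norm_sqrt hA x).trans_le (le_opNorm _ _)

lemma norm_inner_apply_le_vnA_mul_vnA (hA : A.IsPositive) (x y : H) :
    ‖⟪A x, y⟫_ℂ‖ ≤ vnA A x * vnA A y := by
  rw [inner_apply_eq_inner_sqrt hA, vnA_eq_norm_sqrt hA, vnA_eq_norm_sqrt hA]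
  exact norm_inner_le_norm _ _

lemma inner_apply_symm (hA : A.IsPositive) (x y : H) :
    ⟪A y, x⟫_ℂ = starRingEnd ℂ ⟪A x, y⟫_ℂ := by
  rw [inner_apply_eq_inner_sqrt hA, inner_apply_eq_inner_sqrt hA, inner_conj_symm]

lemma vnA_add_sq (hA : A.IsPositive) (x y : H) :
    vnA A (x + y) ^ 2 = vnA A x ^ 2 + 2 * RCLike.re ⟪A x, y⟫_ℂ + vnA A y ^ 2 := by
  simp only [vnA_eq_norm_sqrt hA, inner_apply_eq_inner_sqrt hA, map_add]
  exact norm_add_sq _ _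

lemma vnA_add_sq_add_vnA_sub_sq (hA : A.IsPositive) (x y : H) :
    vnA A (x + y) ^ 2 + vnA A (x - y) ^ 2 = 2 * (vnA A x ^ 2 + vnA A y ^ 2) := by
  have := parallelogram_law_with_norm ℂ (CFC.sqrt A x) (CFC.sqrt A y)
  simp only [vnA_eq_norm_sqrt hA, map_add, map_sub]
  linarith

lemma vnA_inv_smul_self (hA : A.IsPositive) {x : H} (hx : vnA A x ≠ 0) :
    vnA A ((vnA A x : ℂ)⁻¹ • x) = 1 := by
  rw [vnA_smul hA, norm_inv, Complex.norm_real, Real.norm_of_nonneg (vnA_nonneg A x),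
    inv_mul_cancel₀ hx]

lemma vnA_apply_le_mul_of_forall_vnA_eq_one (hA : A.IsPositive) {X : H →L[ℂ] H} {c : ℝ}
    (hX : ∀ u, vnA A u = 1 → vnA A (X u) ≤ c) (h0 : ∀ x, vnA A x = 0 → vnA A (X x) = 0)
    (x : H) : vnA A (X x) ≤ c * vnA A x := by
  rcases (vnA_nonneg A x).eq_or_lt with hx | hx
  · rw [h0 x hx.symm, ← hx, mul_zero]
  · have hu := hX _ (vnA_inv_smul_self hA hx.ne')
    rw [map_smul, vnA_smul hA, norm_inv, Complex.norm_real,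
      Real.norm_of_nonneg (vnA_nonneg A x)] at hu
    rw [mul_comm]
    exact (inv_mul_le_iff₀ hx).mp hu

lemma norm_inner_apply_le_mul_vnA_sq (hA : A.IsPositive) {X : H →L[ℂ] H} {c : ℝ}
    (hX : ∀ u, vnA A u = 1 → ‖⟪A (X u), u⟫_ℂ‖ ≤ c) (x : H) :
    ‖⟪A (X x), x⟫_ℂ‖ ≤ c * vnA A x ^ 2 := by
  rcases (vnA_nonneg A x).eq_or_lt with hx | hx
  · simpa [← hx] using norm_inner_apply_le_vnA_mul_vnA hA (X x) x
  · have hu := hX _ (vnA_inv_smul_self hA hx.ne')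
    rw [map_smul, map_smul, inner_smul_left, inner_smul_right, norm_mul, norm_mul,
      RCLike.norm_conj, norm_inv, Complex.norm_real, Real.norm_of_nonneg (vnA_nonneg A x),
      ← mul_assoc, ← pow_two, inv_pow] at hu
    rw [mul_comm]
    exact (inv_mul_le_iff₀ (by positivity)).mp hu

lemma opnA_le {X : H →L[ℂ] H} {c : ℝ} (hc : 0 ≤ c) (hX : ∀ x, vnA A x = 1 → vnA A (X x) ≤ c) :
    opnA A X ≤ c :=
  Real.sSup_le (by rintro _ ⟨x, hx, rfl⟩; exact hX x hx) hc

lemma vnA_apply_le_opnA {X : H →L[ℂ] H} {c : ℝ} (hX : ∀ x, vnA A (X x) ≤ c * vnA A x) {x : H}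
    (hx : vnA A x = 1) : vnA A (X x) ≤ opnA A X :=
  le_csSup ⟨c, by rintro _ ⟨y, hy, rfl⟩; exact (hX y).trans_eq (by rw [hy, mul_one])⟩ ⟨x, hx, rfl⟩

lemma vnA_comp_apply_le {X Y : H →L[ℂ] H} {a b : ℝ} (ha : 0 ≤ a)
    (hX : ∀ x, vnA A (X x) ≤ a * vnA A x) (hY : ∀ x, vnA A (Y x) ≤ b * vnA A x) (x : H) :
    vnA A ((X ∘L Y) x) ≤ a * b * vnA A x :=
  calc vnA A (X (Y x)) ≤ a * vnA A (Y x) := hX _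
    _ ≤ a * (b * vnA A x) := by gcongr; exact hY x
    _ = a * b * vnA A x := by ring

end Seminorm

lemma le_one_of_forall_pow_two_pow_le {q C : ℝ} (h : ∀ k : ℕ, q ^ 2 ^ k ≤ C) : q ≤ 1 := by
  by_contra! hq
  obtain ⟨n, hn⟩ := pow_unbounded_of_one_lt C hq
  exact (hn.trans_le (pow_le_pow_right₀ hq.le Nat.lt_two_pow_self.le)).not_ge (h n)

namespace IsSelfAdjA

variable {A S : H →L[ℂ] H}

lemma apply_apply (h : IsSelfAdjA A S) (x : H) : A (S x) = adjoint S (A x) :=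
  congrArg (fun B : H →L[ℂ] H => B x) h

lemma inner_apply_comm (h : IsSelfAdjA A S) (x y : H) : ⟪A (S x), y⟫_ℂ = ⟪A x, S y⟫_ℂ := by
  rw [h.apply_apply, adjoint_inner_left]

lemma pow_s6 (h : IsSelfAdjA A S) (n : ℕ) : IsSelfAdjA A (S ^ n) := by
  induction n with
  | zero => rw [IsSelfAdjA, pow_zero, one_def, adjoint_id, comp_id, id_comp]
  | succ n ih =>
    have hadj : adjoint (S ^ (n + 1)) = adjoint (S ^ n) ∘L adjoint S := by
      rw [pow_succ', mul_def, adjoint_comp]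
    rw [IsSelfAdjA, hadj, pow_succ, mul_def, ← comp_assoc, ih, comp_assoc, h, comp_assoc]

lemma vnA_apply_sq_le (hA : A.IsPositive) (h : IsSelfAdjA A S) (x : H) :
    vnA A (S x) ^ 2 ≤ vnA A x * vnA A (S (S x)) :=
  calc vnA A (S x) ^ 2 = RCLike.re ⟪A x, S (S x)⟫_ℂ := by rw [vnA_sq hA, h.inner_apply_comm]
    _ ≤ ‖⟪A x, S (S x)⟫_ℂ‖ := RCLike.re_le_norm _
    _ ≤ vnA A x * vnA A (S (S x)) := norm_inner_apply_le_vnA_mul_vnA hA _ _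

lemma vnA_apply_eq_zero (hA : A.IsPositive) (h : IsSelfAdjA A S) {x : H} (hx : vnA A x = 0) :
    vnA A (S x) = 0 := by
  have := h.vnA_apply_sq_le hA x
  rw [hx, zero_mul] at this
  exact pow_eq_zero_iff two_ne_zero |>.mp (le_antisymm this (sq_nonneg _))

lemma vnA_apply_pow_le (hA : A.IsPositive) (h : IsSelfAdjA A S) {x : H} (hx : vnA A x = 1)
    (k : ℕ) : vnA A (S x) ^ 2 ^ k ≤ vnA A ((S ^ 2 ^ k) x) := by
  induction k with
  | zero => simp
  | succ k ih =>
    calc vnA A (S x) ^ 2 ^ (k + 1) = (vnA A (S x) ^ 2 ^ k) ^ 2 := by rw [pow_succ, pow_mul]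
      _ ≤ vnA A ((S ^ 2 ^ k) x) ^ 2 := by gcongr; exact pow_nonneg (vnA_nonneg A _) _
      _ ≤ vnA A x * vnA A ((S ^ 2 ^ k) ((S ^ 2 ^ k) x)) := (h.pow_s6 _).vnA_apply_sq_le hA x
      _ = vnA A ((S ^ 2 ^ (k + 1)) x) := by
        rw [hx, one_mul, ← comp_apply, ← mul_def, ← pow_add, ← mul_two, ← pow_succ]

lemma vnA_apply_le_norm_mul (hA : A.IsPositive) (h : IsSelfAdjA A S) (x : H) :
    vnA A (S x) ≤ ‖S‖ * vnA A x := by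
  refine vnA_apply_le_mul_of_forall_vnA_eq_one hA (fun u hu => ?_)
    (fun _ => h.vnA_apply_eq_zero hA) x
  rcases (norm_nonneg S).eq_or_lt with hS | hS
  · rw [← hS, norm_eq_zero.mp hS.symm, zero_apply, vnA_eq_norm_sqrt hA, map_zero, norm_zero]
  refine (div_le_one hS).mp (le_one_of_forall_pow_two_pow_le (C := ‖CFC.sqrt A‖ * ‖u‖)
    fun k => ?_)
  rw [div_pow, div_le_iff₀ (by positivity)]
  calc vnA A (S u) ^ 2 ^ k ≤ vnA A ((S ^ 2 ^ k) u) := h.vnA_apply_pow_le hA hu k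
    _ ≤ ‖CFC.sqrt A‖ * (‖S ^ 2 ^ k‖ * ‖u‖) := by
      grw [vnA_le_norm_sqrt_mul hA, le_opNorm]
    _ ≤ ‖CFC.sqrt A‖ * (‖S‖ ^ 2 ^ k * ‖u‖) := by gcongr; exact norm_pow_le' S (by positivity)
    _ = ‖CFC.sqrt A‖ * ‖u‖ * ‖S‖ ^ 2 ^ k := by ring

lemma norm_inner_apply_le_norm (hA : A.IsPositive) (h : IsSelfAdjA A S) {x : H}
    (hx : vnA A x = 1) : ‖⟪A (S x), x⟫_ℂ‖ ≤ ‖S‖ :=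
  calc ‖⟪A (S x), x⟫_ℂ‖ ≤ vnA A (S x) * vnA A x := norm_inner_apply_le_vnA_mul_vnA hA _ _
    _ ≤ ‖S‖ * vnA A x * vnA A x :=
      mul_le_mul_of_nonneg_right (h.vnA_apply_le_norm_mul hA x) (vnA_nonneg A x)
    _ = ‖S‖ := by rw [hx, mul_one, mul_one]

lemma four_mul_re_inner_le (hA : A.IsPositive) (h : IsSelfAdjA A S) {c : ℝ}
    (hc : ∀ u, vnA A u = 1 → ‖⟪A (S u), u⟫_ℂ‖ ≤ c) (x y : H) :
    4 * RCLike.re ⟪A (S x), y⟫_ℂ ≤ 2 * c * (vnA A x ^ 2 + vnA A y ^ 2) := by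
  have hpol : 4 * RCLike.re ⟪A (S x), y⟫_ℂ =
      RCLike.re ⟪A (S (x + y)), x + y⟫_ℂ - RCLike.re ⟪A (S (x - y)), x - y⟫_ℂ := by
    have hsymm : ⟪A (S y), x⟫_ℂ = starRingEnd ℂ ⟪A (S x), y⟫_ℂ := by
      rw [h.inner_apply_comm, inner_apply_symm hA]
    simp only [map_add, map_sub, inner_add_left, inner_add_right, inner_sub_left,
      inner_sub_right, hsymm, RCLike.conj_re]
    ring
  have hplus := (RCLike.re_le_norm _).trans (norm_inner_apply_le_mul_vnA_sq hA hc (x + y))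
  have hminus := neg_le_of_abs_le <|
    (RCLike.abs_re_le_norm _).trans (norm_inner_apply_le_mul_vnA_sq hA hc (x - y))
  have hpar : c * vnA A (x + y) ^ 2 + c * vnA A (x - y) ^ 2 =
      2 * c * (vnA A x ^ 2 + vnA A y ^ 2) := by
    rw [← mul_add, vnA_add_sq_add_vnA_sub_sq hA]; ring
  linarith

lemma vnA_apply_le_mul (hA : A.IsPositive) (h : IsSelfAdjA A S) {c : ℝ}
    (hc : ∀ u, vnA A u = 1 → ‖⟪A (S u), u⟫_ℂ‖ ≤ c) (x : H) : vnA A (S x) ≤ c * vnA A x := by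
  refine vnA_apply_le_mul_of_forall_vnA_eq_one hA (fun u hu => ?_)
    (fun _ => h.vnA_apply_eq_zero hA) x
  set t := vnA A (S u)
  rcases (vnA_nonneg A (S u)).eq_or_lt with ht | ht
  · linarith [norm_nonneg ⟪A (S u), u⟫_ℂ, hc u hu]
  -- polarization with `y = t⁻¹ • S u`, a unit vector with `re ⟪A (S u), y⟫ = t`
  have key := h.four_mul_re_inner_le hA hc u ((t : ℂ)⁻¹ • S u)
  rw [vnA_inv_smul_self hA ht.ne', hu, inner_smul_right, ← Complex.ofReal_inv,
    RCLike.re_to_complex, Complex.re_ofReal_mul, ← RCLike.re_to_complex, ← vnA_sq hA] at key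
  have : t⁻¹ * t ^ 2 = t := by field_simp
  linarith

lemma vnA_add_apply_sq_le (hA : A.IsPositive) (h : IsSelfAdjA A S) (X : H →L[ℂ] H) (x : H) :
    vnA A (X x + S x) ^ 2 ≤
      vnA A (X x) ^ 2 + vnA A (S x) ^ 2 + 2 * (vnA A x * vnA A ((S ∘L X) x)) := by
  have hcross : RCLike.re ⟪A (X x), S x⟫_ℂ ≤ vnA A x * vnA A (S (X x)) :=
    calc RCLike.re ⟪A (X x), S x⟫_ℂ = RCLike.re ⟪A x, S (X x)⟫_ℂ := by
          rw [inner_apply_symm hA (S x), RCLike.conj_re, h.inner_apply_comm]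
      _ ≤ ‖⟪A x, S (X x)⟫_ℂ‖ := RCLike.re_le_norm _
      _ ≤ vnA A x * vnA A (S (X x)) := norm_inner_apply_le_vnA_mul_vnA hA _ _
  rw [vnA_add_sq hA, comp_apply]
  linarith

end IsSelfAdjA

namespace IsReducedAdjA

variable {A T Ts : H →L[ℂ] H}

lemma comp_eq_adjoint_comp (hA : A.IsPositive) (hTs : IsReducedAdjA A T Ts) :
    A ∘L T = adjoint Ts ∘L A := by
  have := congrArg adjoint hTs.1
  rw [adjoint_comp, adjoint_comp, adjoint_adjoint, hA.isSelfAdjoint.adjoint_eq] at this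
  exact this.symm

lemma isSelfAdjA_reA (hA : A.IsPositive) (hTs : IsReducedAdjA A T Ts) :
    IsSelfAdjA A (ReA T Ts) := by
  rw [IsSelfAdjA, ReA, map_smulₛₗ, map_add, comp_smul, smul_comp, comp_add, add_comp, hTs.1,
    hTs.comp_eq_adjoint_comp hA, add_comm, map_inv₀, map_ofNat]

lemma isSelfAdjA_imA (hA : A.IsPositive) (hTs : IsReducedAdjA A T Ts) :
    IsSelfAdjA A (ImA T Ts) := by
  rw [IsSelfAdjA, ImA, map_smulₛₗ, map_sub, comp_smul, smul_comp, comp_sub, sub_comp, hTs.1,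
    hTs.comp_eq_adjoint_comp hA, ← neg_sub, smul_neg, ← neg_smul, map_inv₀, map_mul, map_ofNat,
    Complex.conj_I]
  ring_nf

lemma inner_apply_adj (hA : A.IsPositive) (hTs : IsReducedAdjA A T Ts) (x : H) :
    ⟪A (Ts x), x⟫_ℂ = starRingEnd ℂ ⟪A (T x), x⟫_ℂ := by
  rw [show A (Ts x) = adjoint T (A x) from congrArg (· x) hTs.1, adjoint_inner_left,
    inner_apply_symm hA]

lemma norm_inner_reA (hA : A.IsPositive) (hTs : IsReducedAdjA A T Ts) (x : H) :
    ‖⟪A (ReA T Ts x), x⟫_ℂ‖ = |(⟪A (T x), x⟫_ℂ).re| := by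
  rw [ReA, smul_apply, add_apply, map_smul, map_add, inner_smul_left, inner_add_left,
    hTs.inner_apply_adj hA, Complex.add_conj]
  simp

lemma norm_inner_imA (hA : A.IsPositive) (hTs : IsReducedAdjA A T Ts) (x : H) :
    ‖⟪A (ImA T Ts x), x⟫_ℂ‖ = |(⟪A (T x), x⟫_ℂ).im| := by
  rw [ImA, smul_apply, sub_apply, map_smul, map_sub, inner_smul_left, inner_sub_left,
    hTs.inner_apply_adj hA, Complex.sub_conj]
  simp

lemma bddAbove_norm_inner_image (hA : A.IsPositive) (hTs : IsReducedAdjA A T Ts) :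
    BddAbove ((fun x => ‖⟪A (T x), x⟫_ℂ‖) '' {x : H | vnA A x = 1}) := by
  refine ⟨‖ReA T Ts‖ + ‖ImA T Ts‖, ?_⟩
  rintro _ ⟨x, hx, rfl⟩
  calc ‖⟪A (T x), x⟫_ℂ‖ ≤ |(⟪A (T x), x⟫_ℂ).re| + |(⟪A (T x), x⟫_ℂ).im| :=
        Complex.norm_le_abs_re_add_abs_im _
    _ = ‖⟪A (ReA T Ts x), x⟫_ℂ‖ + ‖⟪A (ImA T Ts x), x⟫_ℂ‖ := by
        rw [hTs.norm_inner_reA hA, hTs.norm_inner_imA hA]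
    _ ≤ ‖ReA T Ts‖ + ‖ImA T Ts‖ :=
        add_le_add ((hTs.isSelfAdjA_reA hA).norm_inner_apply_le_norm hA hx)
          ((hTs.isSelfAdjA_imA hA).norm_inner_apply_le_norm hA hx)

lemma norm_inner_reA_le_wA (hA : A.IsPositive) (hTs : IsReducedAdjA A T Ts) {x : H}
    (hx : vnA A x = 1) : ‖⟪A (ReA T Ts x), x⟫_ℂ‖ ≤ wA A T := by
  rw [hTs.norm_inner_reA hA]
  exact (Complex.abs_re_le_norm _).trans
    (le_csSup (hTs.bddAbove_norm_inner_image hA) ⟨x, hx, rfl⟩)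

lemma norm_inner_imA_le_wA (hA : A.IsPositive) (hTs : IsReducedAdjA A T Ts) {x : H}
    (hx : vnA A x = 1) : ‖⟪A (ImA T Ts x), x⟫_ℂ‖ ≤ wA A T := by
  rw [hTs.norm_inner_imA hA]
  exact (Complex.abs_im_le_norm _).trans
    (le_csSup (hTs.bddAbove_norm_inner_image hA) ⟨x, hx, rfl⟩)

end IsReducedAdjA

lemma comp_add_comp_eq_smul_reA_sq_add_imA_sq (T Ts : H →L[ℂ] H) :
    Ts ∘L T + T ∘L Ts = (2 : ℂ) • (ReA T Ts ^ 2 + ImA T Ts ^ 2) := by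
  have hI : (2 * Complex.I)⁻¹ * (2 * Complex.I)⁻¹ = -(2⁻¹ * 2⁻¹) := by
    rw [← mul_inv, mul_mul_mul_comm, Complex.I_mul_I]; norm_num
  rw [ReA, ImA, sq, sq, smul_mul_smul, smul_mul_smul, hI, ← mul_def, ← mul_def]
  simp only [mul_add, add_mul, mul_sub, sub_mul]
  module

section Estimates

variable {A : H →L[ℂ] H} {w : ℝ}

lemma vnA_sq_apply_le {X : H →L[ℂ] H} (hw : 0 ≤ w) (hX : ∀ x, vnA A (X x) ≤ w * vnA A x)
    (x : H) : vnA A ((X ^ 2) x) ≤ w ^ 2 * vnA A x := by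
  rw [sq w]
  exact vnA_comp_apply_le hw hX hX x

lemma vnA_sq_add_sq_apply_le (hA : A.IsPositive) {P Q : H →L[ℂ] H} (hw : 0 ≤ w)
    (hQ : IsSelfAdjA A Q) (hPw : ∀ x, vnA A (P x) ≤ w * vnA A x)
    (hQw : ∀ x, vnA A (Q x) ≤ w * vnA A x) {x : H} (hx : vnA A x = 1) :
    vnA A ((P ^ 2 + Q ^ 2) x) ≤ √(2 * (w ^ 4 + opnA A ((Q ^ 2) ∘L (P ^ 2)))) := by
  have hP2 := vnA_sq_apply_le hw hPw x
  have hQ2 := vnA_sq_apply_le hw hQw x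
  have hQP := vnA_apply_le_opnA
    (vnA_comp_apply_le (by positivity) (vnA_sq_apply_le hw hQw) (vnA_sq_apply_le hw hPw)) hx
  rw [hx, mul_one] at hP2 hQ2
  apply Real.le_sqrt_of_sq_le
  calc vnA A ((P ^ 2 + Q ^ 2) x) ^ 2
      ≤ vnA A ((P ^ 2) x) ^ 2 + vnA A ((Q ^ 2) x) ^ 2 +
          2 * (vnA A x * vnA A (((Q ^ 2) ∘L (P ^ 2)) x)) :=
        (hQ.pow_s6 2).vnA_add_apply_sq_le hA _ x
    _ ≤ (w ^ 2) ^ 2 + (w ^ 2) ^ 2 + 2 * (1 * opnA A ((Q ^ 2) ∘L (P ^ 2))) := by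
        rw [hx]; gcongr <;> exact vnA_nonneg A _
    _ = 2 * (w ^ 4 + opnA A ((Q ^ 2) ∘L (P ^ 2))) := by ring

end Estimates

lemma sqrt_two_div_two_mul_sqrt_le {w r : ℝ} (hr : r ≤ w ^ 4) :
    √2 / 2 * √(w ^ 4 + r) ≤ w ^ 2 :=
  calc √2 / 2 * √(w ^ 4 + r) ≤ √2 / 2 * √(2 * (w ^ 2) ^ 2) := by gcongr; linarith
    _ = √2 * √2 / 2 * w ^ 2 := by rw [Real.sqrt_mul zero_le_two, Real.sqrt_sq (sq_nonneg w)]; ring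
    _ = w ^ 2 := by rw [Real.mul_self_sqrt zero_le_two]; ring

theorem stmt6_general (A T Ts : H →L[ℂ] H) (hA : A.IsPositive)
    (hTs : IsReducedAdjA A T Ts) :
    (1/4) * opnA A (Ts ∘L T + T ∘L Ts) ≤ (Real.sqrt 2 / 2) * Real.sqrt ((wA A T)^4 + opnA A (((ImA T Ts) ^ (2:ℕ)) ∘L ((ReA T Ts) ^ (2:ℕ)))) ∧
    (Real.sqrt 2 / 2) * Real.sqrt ((wA A T)^4 + opnA A (((ImA T Ts) ^ (2:ℕ)) ∘L ((ReA T Ts) ^ (2:ℕ)))) ≤ (wA A T)^2 := by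
  set w := wA A T
  set r := opnA A ((ImA T Ts ^ 2) ∘L (ReA T Ts ^ 2))
  have hw : 0 ≤ w := Real.sSup_nonneg (by rintro _ ⟨x, -, rfl⟩; exact norm_nonneg _)
  have hRe : ∀ x, vnA A (ReA T Ts x) ≤ w * vnA A x :=
    (hTs.isSelfAdjA_reA hA).vnA_apply_le_mul hA fun _ => hTs.norm_inner_reA_le_wA hA
  have hIm : ∀ x, vnA A (ImA T Ts x) ≤ w * vnA A x :=
    (hTs.isSelfAdjA_imA hA).vnA_apply_le_mul hA fun _ => hTs.norm_inner_imA_le_wA hA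
  have hr : r ≤ w ^ 4 := opnA_le (by positivity) fun x hx => by
    have := vnA_comp_apply_le (by positivity) (vnA_sq_apply_le hw hIm) (vnA_sq_apply_le hw hRe) x
    rwa [hx, mul_one, ← pow_add] at this
  have hN : opnA A (Ts ∘L T + T ∘L Ts) ≤ 2 * √(2 * (w ^ 4 + r)) := opnA_le (by positivity)
    fun x hx => by
      rw [comp_add_comp_eq_smul_reA_sq_add_imA_sq, smul_apply, vnA_smul hA, Complex.norm_two]
      gcongr
      exact vnA_sq_add_sq_apply_le hA hw (hTs.isSelfAdjA_imA hA) hRe hIm hx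
  rw [Real.sqrt_mul zero_le_two] at hN
  exact ⟨by linarith, sqrt_two_div_two_mul_sqrt_le hr⟩

theorem stmt6 (A T Ts : H →L[ℂ] H) (hA : A.IsPositive) (hA0 : A ≠ 0)
    (hTs : IsReducedAdjA A T Ts) :
    (1/4) * opnA A (Ts ∘L T + T ∘L Ts) ≤ (Real.sqrt 2 / 2) * Real.sqrt ((wA A T)^4 + opnA A (((ImA T Ts) ^ (2:ℕ)) ∘L ((ReA T Ts) ^ (2:ℕ)))) ∧
    (Real.sqrt 2 / 2) * Real.sqrt ((wA A T)^4 + opnA A (((ImA T Ts) ^ (2:ℕ)) ∘L ((ReA T Ts) ^ (2:ℕ)))) ≤ (wA A T)^2 :=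
  stmt6_general A T Ts hA hTs
end
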